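/- arXiv:2206.01054 — 2 statements merged into one kernel-verified Lean document; each statement's English description precedes it below -/
import Mathlib

section
/- For every m ≥ 1, the automorphism group of the reduced power graph RP(Z_{2^m}) of the cyclic group of order 2^m is isomorphic to Z_2 × ∏_{i=2}^{m} S_{φ(2^i)}, where φ is Euler's totient function (so φ(2^i) = 2^{i-1}) and S_k denotes the symmetric group on k letters. -/
open Subgroup Set

variable (G : Type*) [Group G]

/-- Arc of the directed reduced power graph `→RP(G)`: from `x` to `y` iff `⟨y⟩ ⊊ ⟨x⟩`. -/
def rpArc (x y : G) : Prop := zpowers y < zpowers x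

/-- Adjacency in the undirected reduced power graph `RP(G)`:
`x` and `y` are adjacent iff `⟨x⟩ ⊊ ⟨y⟩` or `⟨y⟩ ⊊ ⟨x⟩`. -/
def rpAdj (x y : G) : Prop := zpowers x < zpowers y ∨ zpowers y < zpowers x

/-- `x ≃ y` iff `x` and `y` have the same neighbourhood in `RP(G)`. -/
def simEq (x y : G) : Prop := ∀ z : G, rpAdj G x z ↔ rpAdj G y z

/-- The `≃`-class `x̂` of `x`. -/
def hatCls (x : G) : Set G := {y | simEq G y x}

/-- The `∼`-class `[x]` of `x`: the set of generators of `⟨x⟩`. -/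
def genCls (x : G) : Set G := {y | zpowers y = zpowers x}

/-- The automorphism group of the directed reduced power graph `→RP(G)`,
as a subgroup of the permutations of `G`. -/
def DRPAut : Subgroup (Equiv.Perm G) where
  carrier := {π | ∀ x y : G, rpArc G (π x) (π y) ↔ rpArc G x y}
  one_mem' := fun _ _ => Iff.rfl
  mul_mem' := by
    intro a b ha hb x y
    simp only [Equiv.Perm.mul_apply]
    exact (ha (b x) (b y)).trans (hb x y)
  inv_mem' := by
    intro a ha x y
    have h := ha (a⁻¹ x) (a⁻¹ y)
    simp only [Equiv.Perm.inv_def, Equiv.apply_symm_apply] at h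
    exact h.symm

/-- The automorphism group of the undirected reduced power graph `RP(G)`,
as a subgroup of the permutations of `G`. -/
def RPAut : Subgroup (Equiv.Perm G) where
  carrier := {π | ∀ x y : G, rpAdj G (π x) (π y) ↔ rpAdj G x y}
  one_mem' := fun _ _ => Iff.rfl
  mul_mem' := by
    intro a b ha hb x y
    simp only [Equiv.Perm.mul_apply]
    exact (ha (b x) (b y)).trans (hb x y)
  inv_mem' := by
    intro a ha x y
    have h := ha (a⁻¹ x) (a⁻¹ y)
    simp only [Equiv.Perm.inv_def, Equiv.apply_symm_apply] at h
    exact h.symm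

/-- `⟨x⟩` is a maximal cyclic subgroup of `G`. -/
def IsMaxCyc (x : G) : Prop := ∀ y : G, zpowers x ≤ zpowers y → zpowers x = zpowers y

/-- The `≃`-class of `x` is of Type I: it is a single `∼`-class, `x̂ = [x]`. -/
def TypeI (x : G) : Prop := hatCls G x = genCls G x

/-- The `≃`-class of `x` is of Type II: it is a union of `r ≥ 2` `∼`-classes whose
cyclic subgroups are distinct maximal cyclic subgroups of `G`, all of the same order. -/
def TypeII (x : G) : Prop :=
  (∃ y z : G, simEq G y x ∧ simEq G z x ∧ zpowers y ≠ zpowers z) ∧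
  ∀ y : G, simEq G y x → IsMaxCyc G y ∧ orderOf y = orderOf x

/-- The `≃`-class of `x` is of Type III: `G` is non-cyclic, the class is a union of
`r ≥ 2` `∼`-classes whose cyclic subgroups are maximal cyclic subgroups of prime order,
and at least two distinct orders occur. -/
def TypeIII (x : G) : Prop :=
  ¬ IsCyclic G ∧
  (∃ y z : G, simEq G y x ∧ simEq G z x ∧ orderOf y ≠ orderOf z) ∧
  ∀ y : G, simEq G y x → IsMaxCyc G y ∧ (orderOf y).Prime

/-- The `≃`-class of `x` is of Type IV with parameter `(p, q)`: it is a union of exactly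
two `∼`-classes of elements of distinct prime orders `p` and `q`, the corresponding cyclic
subgroups being non-maximal when `G` is non-cyclic, and maximal when `G` is cyclic. -/
def TypeIV (x : G) (p q : ℕ) : Prop :=
  p.Prime ∧ q.Prime ∧ p ≠ q ∧
  (∃ x₁ x₂ : G, simEq G x₁ x ∧ simEq G x₂ x ∧ orderOf x₁ = p ∧ orderOf x₂ = q ∧
     ∀ y : G, simEq G y x → zpowers y = zpowers x₁ ∨ zpowers y = zpowers x₂) ∧
  ((¬ IsCyclic G ∧ ∀ y : G, simEq G y x → ¬ IsMaxCyc G y) ∨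
   (IsCyclic G ∧ ∀ y : G, simEq G y x → IsMaxCyc G y))

/-- A `P(G)`-permutation: a permutation `σ` of `G` preserving element orders, mapping each
`∼`-class `[x]` onto `[x^σ]`, and preserving inclusion and non-inclusion of cyclic subgroups. -/
def IsPPerm (σ : Equiv.Perm G) : Prop :=
  (∀ x : G, orderOf (σ x) = orderOf x) ∧
  (∀ x : G, σ '' genCls G x = genCls G (σ x)) ∧
  (∀ x y : G, zpowers y ≤ zpowers x ↔ zpowers (σ y) ≤ zpowers (σ x))

/-- A permutation of `G` fixing every `≃`-class setwise. -/
def FixesClasses (τ : Equiv.Perm G) : Prop := ∀ x : G, simEq G (τ x) x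

/-!
In a finite cyclic group `⟨x⟩ ≤ ⟨y⟩` iff `orderOf x ∣ orderOf y`, and in a `p`-group these orders
form a chain, so two elements are adjacent in `RP(G)` iff their orders differ: `RP(G)` is the
complete multipartite graph whose parts are the sets of elements of order `2 ^ k`, of sizes
`φ (2 ^ k)`. An automorphism maps parts onto parts of the same size. For `G = ℤ_{2^m}` the sizes are
`1, 1, 2, 4, …, 2 ^ (m - 1)`, so an automorphism is an arbitrary permutation of each part of size
`≥ 2` together with a permutation of the two singleton parts `{1}` and `{involution}`.
-/

open Equiv

def Equiv.Perm.mulEquivPiPermFiber {α ι : Type*} (f : α → ι) (H : Subgroup (Perm α))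
    (hH : ∀ π, π ∈ H ↔ ∀ a, f (π a) = f a) : H ≃* ∀ i, Perm {a // f a = i} :=
  MulEquiv.trans
    { toFun := fun π => .op ⟨DomMulAct.mk π.1,
        DomMulAct.mem_stabilizer_iff.2 (funext ((hH π.1).1 π.2))⟩
      invFun := fun π => ⟨DomMulAct.mk.symm π.unop.1,
        (hH _).2 (congrFun (DomMulAct.mem_stabilizer_iff.1 π.unop.2))⟩
      left_inv := fun _ => rfl
      right_inv := fun _ => rfl
      map_mul' := fun _ _ => rfl }
    (DomMulAct.stabilizerMulEquiv f)

def MulEquiv.piOptionEquivProd {ι : Type*} {M : Option ι → Type*} [∀ i, Mul (M i)] :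
    (∀ i, M i) ≃* M none × ∀ i, M (some i) :=
  { Equiv.piOptionEquivProd with map_mul' := fun _ _ => rfl }

theorem Equiv.Perm.card_fiber_apply_eq {α β : Type*} (f : α → β) {π : Perm α}
    (hπ : ∀ x y, f (π x) = f (π y) ↔ f x = f y) (x : α) :
    Nat.card {a // f a = f (π x)} = Nat.card {a // f a = f x} :=
  Nat.card_congr (π.subtypeEquiv fun a => (hπ a x).symm).symm

theorem Nat.totient_two_pow (k : ℕ) : (2 ^ k).totient = 2 ^ (k - 1) := by
  rcases k with _ | k
  · rfl
  · simp [Nat.totient_prime_pow_succ Nat.prime_two]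

variable {G}

section Cyclic

variable [Fintype G] [IsCyclic G]

theorem IsCyclic.mem_zpowers_of_orderOf_dvd {x y : G} (h : orderOf x ∣ orderOf y) :
    x ∈ zpowers y := by
  classical
  have hsub : (zpowers y : Set G).toFinset ⊆ ({a | a ^ orderOf y = 1} : Finset G) := by
    intro a ha
    obtain ⟨k, rfl⟩ := Subgroup.mem_zpowers_iff.1 (Set.mem_toFinset.1 ha)
    simp only [Finset.mem_filter, Finset.mem_univ, true_and]
    rw [← zpow_natCast, ← zpow_mul, mul_comm, zpow_mul, zpow_natCast, pow_orderOf_eq_one,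
      one_zpow]
  have heq := Finset.eq_of_subset_of_card_le hsub (by
    rw [Set.toFinset_card, ← Nat.card_eq_fintype_card, SetLike.coe_sort_coe, Nat.card_zpowers]
    exact IsCyclic.card_pow_eq_one_le (orderOf_pos y))
  have hx : x ∈ ({a | a ^ orderOf y = 1} : Finset G) := by
    simpa using orderOf_dvd_iff_pow_eq_one.1 h
  rwa [← heq, Set.mem_toFinset] at hx

theorem IsCyclic.zpowers_le_zpowers_iff {x y : G} :
    zpowers x ≤ zpowers y ↔ orderOf x ∣ orderOf y :=
  ⟨fun h => orderOf_dvd_of_mem_zpowers (h (mem_zpowers x)),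
    fun h => zpowers_le.2 (mem_zpowers_of_orderOf_dvd h)⟩

theorem IsCyclic.natCard_orderOf_eq_totient {d : ℕ} (hd : d ∣ Fintype.card G) :
    Nat.card {a : G // orderOf a = d} = d.totient := by
  classical
  rw [Nat.card_eq_fintype_card, Fintype.card_subtype, IsCyclic.card_orderOf_eq_totient hd]

theorem IsCyclic.eq_of_orderOf_eq_of_totient_eq_one {x y : G} (h : orderOf x = orderOf y)
    (h1 : (orderOf x).totient = 1) : x = y := by
  have : Subsingleton {a : G // orderOf a = orderOf x} := by
    rw [← Finite.card_le_one_iff_subsingleton, natCard_orderOf_eq_totient orderOf_dvd_card, h1]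
  exact congrArg Subtype.val (Subsingleton.elim (⟨x, rfl⟩ : {a : G // orderOf a = orderOf x})
    ⟨y, h.symm⟩)

end Cyclic

theorem IsPGroup.orderOf_dvd_or_dvd {p : ℕ} [Fact p.Prime] (hG : IsPGroup p G) (x y : G) :
    orderOf x ∣ orderOf y ∨ orderOf y ∣ orderOf x := by
  obtain ⟨a, ha⟩ := IsPGroup.iff_orderOf.1 hG x
  obtain ⟨b, hb⟩ := IsPGroup.iff_orderOf.1 hG y
  rw [ha, hb]
  exact (le_total a b).imp (pow_dvd_pow p) (pow_dvd_pow p)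

section CyclicPGroup

variable [Fintype G] [IsCyclic G] {p : ℕ} [Fact p.Prime]

theorem rpAdj_iff_orderOf_ne (hG : IsPGroup p G) {x y : G} :
    rpAdj G x y ↔ orderOf x ≠ orderOf y := by
  simp only [rpAdj, lt_iff_le_not_ge, IsCyclic.zpowers_le_zpowers_iff]
  rcases hG.orderOf_dvd_or_dvd x y with h | h <;>
    constructor <;> intro h' <;> grind [Nat.dvd_antisymm]

theorem mem_RPAut_iff_orderOf_eq_iff (hG : IsPGroup p G) {π : Perm G} :
    π ∈ RPAut G ↔ ∀ x y, orderOf (π x) = orderOf (π y) ↔ orderOf x = orderOf y := by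
  change (∀ x y, _) ↔ _
  simp only [rpAdj_iff_orderOf_ne hG, not_iff_not]

theorem totient_orderOf_apply_of_mem_RPAut (hG : IsPGroup p G) {π : Perm G} (hπ : π ∈ RPAut G)
    (x : G) : (orderOf (π x)).totient = (orderOf x).totient := by
  rw [← IsCyclic.natCard_orderOf_eq_totient orderOf_dvd_card,
    ← IsCyclic.natCard_orderOf_eq_totient orderOf_dvd_card]
  exact Perm.card_fiber_apply_eq orderOf ((mem_RPAut_iff_orderOf_eq_iff hG).1 hπ) x

end CyclicPGroup

section CyclicTwoGroup

variable {m : ℕ}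

variable (m) in
/-- The exponent `k` of `orderOf x = 2 ^ k`, except that the two classes `k = 0` and `k = 1`,
which both consist of a single element, are merged into `none`. -/
noncomputable def orderClass (x : G) : Option (Finset.Icc 2 m) :=
  if h : 2 ≤ Nat.log 2 (orderOf x) ∧ Nat.log 2 (orderOf x) ≤ m then
    some ⟨Nat.log 2 (orderOf x), Finset.mem_Icc.2 h⟩
  else none

theorem orderClass_of_orderOf_eq {k : ℕ} {x : G} (hx : orderOf x = 2 ^ k) :
    orderClass m x = if h : 2 ≤ k ∧ k ≤ m then some ⟨k, Finset.mem_Icc.2 h⟩ else none := by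
  simp only [orderClass, hx, Nat.log_pow Nat.one_lt_two]

variable [Fintype G]

theorem exists_orderOf_eq_two_pow (hcard : Fintype.card G = 2 ^ m) (x : G) :
    ∃ k ≤ m, orderOf x = 2 ^ k :=
  (Nat.dvd_prime_pow Nat.prime_two).1 (hcard ▸ orderOf_dvd_card)

theorem orderClass_eq_some_iff (hcard : Fintype.card G = 2 ^ m) {x : G} {i : Finset.Icc 2 m} :
    orderClass m x = some i ↔ orderOf x = 2 ^ (i : ℕ) := by
  obtain ⟨k, hkm, hx⟩ := exists_orderOf_eq_two_pow hcard x
  obtain ⟨i, hi⟩ := i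
  obtain ⟨hi₂, him⟩ := Finset.mem_Icc.1 hi
  rw [orderClass_of_orderOf_eq hx, hx, Nat.pow_right_inj Nat.one_lt_two]
  split_ifs <;> simp
  omega

theorem orderClass_eq_none_iff (hcard : Fintype.card G = 2 ^ m) {x : G} :
    orderClass m x = none ↔ orderOf x = 1 ∨ orderOf x = 2 := by
  obtain ⟨k, hkm, hx⟩ := exists_orderOf_eq_two_pow hcard x
  rw [orderClass_of_orderOf_eq hx, hx, ← pow_zero 2, Nat.pow_right_inj Nat.one_lt_two,
    Nat.pow_eq_self_iff Nat.one_lt_two]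
  split_ifs <;> simp <;> omega

theorem orderClass_eq_orderClass_iff (hcard : Fintype.card G = 2 ^ m) {x y : G} :
    orderClass m x = orderClass m y ↔ (orderOf x).totient = (orderOf y).totient := by
  obtain ⟨a, ham, hx⟩ := exists_orderOf_eq_two_pow hcard x
  obtain ⟨b, hbm, hy⟩ := exists_orderOf_eq_two_pow hcard y
  rw [orderClass_of_orderOf_eq hx, orderClass_of_orderOf_eq hy, hx, hy, Nat.totient_two_pow,
    Nat.totient_two_pow, Nat.pow_right_inj Nat.one_lt_two]
  split_ifs <;> simp <;> omega

variable [IsCyclic G]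

theorem orderOf_eq_orderOf_iff_orderClass (hcard : Fintype.card G = 2 ^ m) {x y : G} :
    orderOf x = orderOf y ↔
      orderClass m x = orderClass m y ∧ (orderClass m x = none → x = y) := by
  constructor
  · intro h
    refine ⟨(orderClass_eq_orderClass_iff hcard).2 (by rw [h]), fun hx => ?_⟩
    exact IsCyclic.eq_of_orderOf_eq_of_totient_eq_one h
      (Nat.totient_eq_one_iff.2 ((orderClass_eq_none_iff hcard).1 hx))
  · rintro ⟨hxy, hnone⟩
    cases hx : orderClass m x with
    | none => rw [hnone hx]
    | some i =>
      rw [(orderClass_eq_some_iff hcard).1 hx, (orderClass_eq_some_iff hcard).1 (hxy ▸ hx)]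

theorem mem_RPAut_iff_orderClass (hcard : Fintype.card G = 2 ^ m) {π : Perm G} :
    π ∈ RPAut G ↔ ∀ x, orderClass m (π x) = orderClass m x := by
  have hG : IsPGroup 2 G := IsPGroup.of_card (n := m) (by rw [Nat.card_eq_fintype_card, hcard])
  constructor
  · intro hπ x
    exact (orderClass_eq_orderClass_iff hcard).2 (totient_orderOf_apply_of_mem_RPAut hG hπ x)
  · intro hπ
    rw [mem_RPAut_iff_orderOf_eq_iff hG]
    intro x y
    simp only [orderOf_eq_orderOf_iff_orderClass hcard, hπ, π.injective.eq_iff]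

theorem card_orderClass_eq_some (hcard : Fintype.card G = 2 ^ m) (i : Finset.Icc 2 m) :
    Nat.card {x : G // orderClass m x = some i} = (2 ^ (i : ℕ)).totient := by
  simp_rw [orderClass_eq_some_iff hcard]
  exact IsCyclic.natCard_orderOf_eq_totient (hcard ▸ pow_dvd_pow 2 (Finset.mem_Icc.1 i.2).2)

theorem card_orderClass_eq_none (hcard : Fintype.card G = 2 ^ m) (hm : 1 ≤ m) :
    Nat.card {x : G // orderClass m x = none} = 2 := by
  classical
  have hdisj : Disjoint (fun x : G => orderOf x = 1) (fun x => orderOf x = 2) :=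
    Pi.disjoint_iff.2 fun x => by simp +contextual
  simp_rw [orderClass_eq_none_iff hcard]
  rw [Nat.card_congr (subtypeOrEquiv _ _ hdisj), Nat.card_sum,
    IsCyclic.natCard_orderOf_eq_totient (one_dvd _),
    IsCyclic.natCard_orderOf_eq_totient (hcard ▸ dvd_pow_self 2 (by omega))]
  rfl

end CyclicTwoGroup

/-- `Aut(RP(ℤ_{2^m})) ≅ ℤ₂ × ∏_{i=2}^{m} S_{φ(2^i)}` for every `m ≥ 1`. -/
theorem aut_RP_cyclic_two_pow (m : ℕ) (hm : 1 ≤ m) {G : Type*} [Group G] [Fintype G]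
    (hG : IsCyclic G) (hcard : Fintype.card G = 2 ^ m) :
    Nonempty (RPAut G ≃* Multiplicative (ZMod 2) ×
      ((i : Finset.Icc 2 m) → Equiv.Perm (Fin (Nat.totient (2 ^ (i : ℕ)))))) := by
  let eMerged : Perm {x : G // orderClass m x = none} ≃* Multiplicative (ZMod 2) :=
    mulEquivOfPrimeCardEq (p := 2)
      (by rw [Nat.card_perm, card_orderClass_eq_none hcard hm]; rfl) (by simp)
  let eParts (i : Finset.Icc 2 m) :
      Perm {x : G // orderClass m x = some i} ≃* Perm (Fin (2 ^ (i : ℕ)).totient) :=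
    (Finite.equivFinOfCardEq (card_orderClass_eq_some hcard i)).permCongrHom
  exact ⟨(Perm.mulEquivPiPermFiber _ _ fun _ => mem_RPAut_iff_orderClass hcard).trans <|
    MulEquiv.piOptionEquivProd.trans (eMerged.prodCongr (MulEquiv.piCongrRight eParts))⟩
end

section
/- Let G be a finite group and let x, y be non-identity elements of G with ⟨y⟩ ⊊ ⟨x⟩. If the ≃-class x̂ is of Type I, then: (a) if ŷ is of Type I, or of Type IV with parameter (p,q) where p and q are both odd primes, then |ŷ| ≤ |x̂|, with equality when both x̂ and ŷ are of Type I, o(x) = 2·o(y) and o(y) is odd; (b) if ŷ is of Type IV with parameter (2,p) for a prime p and o(x) = 2p, then |ŷ| > |x̂|. -/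
open Subgroup Set

variable (G : Type*) [Group G]

/-!
A Type I class is a single `∼`-class, so `|x̂| = φ(o(x))`; a Type IV class with parameter
`(p, q)` is the union of the generators of two cyclic groups of orders `p` and `q`, so
`|ŷ| = (p - 1) + (q - 1)`. When `⟨y⟩ ⊊ ⟨x⟩`, the two prime-order subgroups in `ŷ` are adjacent
to `x` and hence lie in `⟨x⟩`, so `pq ∣ o(x)`. Everything then reduces to monotonicity of `φ`
along divisibility, `a + b ≤ ab` for `a, b ≥ 2`, and `φ(2n) = φ(n)` for odd `n`.
-/

lemma Nat.totient_le_totient_of_dvd {m n : ℕ} (hn : n ≠ 0) (h : m ∣ n) : m.totient ≤ n.totient :=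
  Nat.le_of_dvd (Nat.totient_pos.mpr (Nat.pos_of_ne_zero hn)) (Nat.totient_dvd_of_dvd h)

section
variable {G : Type*} [Group G]

lemma simEq_of_zpowers_eq {a b : G} (h : zpowers a = zpowers b) : simEq G a b := by
  intro z
  rw [rpAdj, rpAdj, h]

lemma mem_genCls_iff [Finite G] {x a : G} :
    a ∈ genCls G x ↔ a ∈ zpowers x ∧ orderOf a = orderOf x := by
  refine ⟨fun h => ⟨h ▸ mem_zpowers a, by rw [← Nat.card_zpowers, ← Nat.card_zpowers, h.out]⟩,
    fun ⟨ha, ho⟩ => ?_⟩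
  refine Subgroup.eq_of_le_of_card_ge (zpowers_le.mpr ha) ?_
  rw [Nat.card_zpowers, Nat.card_zpowers, ho]

lemma ncard_genCls [Finite G] (x : G) : (genCls G x).ncard = (orderOf x).totient := by
  classical
  have := Fintype.ofFinite G
  have himage : genCls G x = ((↑) : zpowers x → G) '' {a | orderOf a = orderOf x} := by
    ext a
    rw [mem_genCls_iff]
    constructor
    · rintro ⟨ha, ho⟩
      exact ⟨⟨a, ha⟩, by rwa [Set.mem_ofPred_eq, Subgroup.orderOf_mk], rfl⟩
    · rintro ⟨a, ho, rfl⟩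
      exact ⟨a.2, (Subgroup.orderOf_coe a).trans ho⟩
  have hcount := IsCyclic.card_orderOf_eq_totient (α := zpowers x) (d := orderOf x)
    (by rw [Fintype.card_zpowers])
  rw [himage, Set.ncard_image_of_injective _ Subtype.val_injective, ← hcount,
    ← Set.ncard_coe_finset, Finset.coe_filter]
  simp only [Finset.mem_univ, true_and]

lemma genCls_disjoint_of_orderOf_ne {a b : G} (h : orderOf a ≠ orderOf b) :
    Disjoint (genCls G a) (genCls G b) := by
  refine Set.disjoint_left.mpr fun z (ha : zpowers z = zpowers a) (hb : zpowers z = zpowers b) =>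
    h ?_
  rw [← Nat.card_zpowers, ← Nat.card_zpowers, ← ha, ← hb]

lemma hatCls_eq_genCls_union {y x₁ x₂ : G} (h₁ : simEq G x₁ y) (h₂ : simEq G x₂ y)
    (hall : ∀ z : G, simEq G z y → zpowers z = zpowers x₁ ∨ zpowers z = zpowers x₂) :
    hatCls G y = genCls G x₁ ∪ genCls G x₂ := by
  ext z
  refine ⟨hall z, ?_⟩
  rintro (hz | hz)
  · exact fun w => (simEq_of_zpowers_eq hz w).trans (h₁ w)
  · exact fun w => (simEq_of_zpowers_eq hz w).trans (h₂ w)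

/-- `z` is adjacent to `x`, and `⟨x⟩ ⊊ ⟨z⟩` is impossible: `⟨z⟩` has prime order, so `⟨x⟩` would
be trivial, yet `⟨y⟩ ⊊ ⟨x⟩`. -/
lemma zpowers_lt_of_simEq_of_prime [Finite G] {x y z : G} (hsub : zpowers y < zpowers x)
    (hz : simEq G z y) (hp : (orderOf z).Prime) : zpowers z < zpowers x := by
  refine ((hz x).mpr (Or.inl hsub)).resolve_right fun hxz => ?_
  have hdvd : Nat.card (zpowers x) ∣ orderOf z := Nat.card_zpowers z ▸ card_dvd_of_le hxz.le
  rcases hp.eq_one_or_self_of_dvd _ hdvd with hone | hp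
  · exact not_lt_bot (card_eq_one.mp hone ▸ hsub)
  · exact hxz.ne (eq_of_le_of_card_ge hxz.le (by rw [hp, Nat.card_zpowers]))

lemma TypeI.ncard_hatCls [Finite G] {x : G} (h : TypeI G x) :
    (hatCls G x).ncard = (orderOf x).totient := by
  rw [show hatCls G x = genCls G x from h, ncard_genCls]

lemma TypeIV.ncard_hatCls [Finite G] {y : G} {p q : ℕ} (h : TypeIV G y p q) :
    (hatCls G y).ncard = (p - 1) + (q - 1) := by
  obtain ⟨hp, hq, hpq, ⟨x₁, x₂, h₁, h₂, rfl, rfl, hall⟩, -⟩ := h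
  rw [hatCls_eq_genCls_union h₁ h₂ hall,
    Set.ncard_union_eq (genCls_disjoint_of_orderOf_ne hpq) (Set.toFinite _) (Set.toFinite _),
    ncard_genCls, ncard_genCls, Nat.totient_prime hp, Nat.totient_prime hq]

lemma TypeIV.mul_dvd_orderOf [Finite G] {x y : G} {p q : ℕ} (h : TypeIV G y p q)
    (hsub : zpowers y < zpowers x) : p * q ∣ orderOf x := by
  obtain ⟨hp, hq, hpq, ⟨x₁, x₂, h₁, h₂, rfl, rfl, -⟩, -⟩ := h
  have hdvd {z : G} (hz : simEq G z y) (hpz : (orderOf z).Prime) : orderOf z ∣ orderOf x :=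
    orderOf_dvd_of_mem_zpowers ((zpowers_lt_of_simEq_of_prime hsub hz hpz).le (mem_zpowers z))
  exact ((Nat.coprime_primes hp hq).mpr hpq).mul_dvd_of_dvd_of_dvd (hdvd h₁ hp) (hdvd h₂ hq)

end

theorem typeI_card_compare_general {G : Type*} [Group G] [Fintype G] (x y : G)
    (hsub : zpowers y < zpowers x) (hTx : TypeI G x) :
    ((TypeI G y ∨ ∃ p q : ℕ, p ≠ 2 ∧ q ≠ 2 ∧ TypeIV G y p q) →
        (hatCls G y).ncard ≤ (hatCls G x).ncard ∧
        (TypeI G y ∧ orderOf x = 2 * orderOf y ∧ Odd (orderOf y) →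
          (hatCls G y).ncard = (hatCls G x).ncard)) ∧
    (∀ p : ℕ, TypeIV G y 2 p → orderOf x = 2 * p →
        (hatCls G x).ncard < (hatCls G y).ncard) := by
  rw [hTx.ncard_hatCls]
  refine ⟨fun hTy => ⟨?_, ?_⟩, fun p hTy hox => ?_⟩
  · rcases hTy with hTy | ⟨p, q, hp2, hq2, hTy⟩
    · rw [hTy.ncard_hatCls]
      exact Nat.totient_le_totient_of_dvd (orderOf_pos x).ne'
        (orderOf_dvd_of_mem_zpowers (hsub.le (mem_zpowers y)))
    · have ⟨hp, hq, hpq, _⟩ := hTy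
      calc (hatCls G y).ncard = (p - 1) + (q - 1) := hTy.ncard_hatCls
        _ ≤ (p - 1) * (q - 1) := add_le_mul (by have := hp.two_le; omega)
            (by have := hq.two_le; omega)
        _ = (p * q).totient := by
          rw [Nat.totient_mul ((Nat.coprime_primes hp hq).mpr hpq), Nat.totient_prime hp,
            Nat.totient_prime hq]
        _ ≤ (orderOf x).totient :=
          Nat.totient_le_totient_of_dvd (orderOf_pos x).ne' (hTy.mul_dvd_orderOf hsub)
  · rintro ⟨hTy, hox, hodd⟩
    rw [hTy.ncard_hatCls, hox, Nat.totient_two_mul_of_odd hodd]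
  · have ⟨_, hp, h2p, _⟩ := hTy
    rw [hTy.ncard_hatCls, hox, Nat.totient_two_mul_of_odd (hp.odd_of_ne_two h2p.symm),
      Nat.totient_prime hp]
    omega

/-- for non-identity `x, y` with `⟨y⟩ ⊊ ⟨x⟩` and `x̂` of Type I:
(a) if `ŷ` is of Type I or of Type IV with both parameters odd primes, then `|ŷ| ≤ |x̂|`,
with equality when both classes are of Type I, `o(x) = 2·o(y)` and `o(y)` is odd;
(b) if `ŷ` is of Type IV with parameter `(2, p)` and `o(x) = 2p`, then `|ŷ| > |x̂|`. -/
theorem typeI_card_compare {G : Type*} [Group G] [Fintype G] (x y : G)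
    (hx : x ≠ 1) (hy : y ≠ 1) (hsub : zpowers y < zpowers x) (hTx : TypeI G x) :
    ((TypeI G y ∨ ∃ p q : ℕ, p ≠ 2 ∧ q ≠ 2 ∧ TypeIV G y p q) →
        (hatCls G y).ncard ≤ (hatCls G x).ncard ∧
        (TypeI G y ∧ orderOf x = 2 * orderOf y ∧ Odd (orderOf y) →
          (hatCls G y).ncard = (hatCls G x).ncard)) ∧
    (∀ p : ℕ, TypeIV G y 2 p → orderOf x = 2 * p →
        (hatCls G x).ncard < (hatCls G y).ncard) :=
  typeI_card_compare_general x y hsub hTx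
end
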